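/- arXiv:2110.08824 — 5 statements merged into one kernel-verified Lean document; each statement's English description precedes it below -/
import Mathlib

section
/- If β > 0, γ > 0, q ∈ (0,1), and the minimum degree k_min of the graph satisfies βγ⁻¹ > 1/(q²k_min), then for all t ≥ 0, e^{qβAt}(βA − (γ/q)I)u ⪯ e^{(p/q)γt}·e^{βAt}(βA − γI)u componentwise, where p = 1 − q. -/
/-!
Every power `A ^ k` of the adjacency matrix is entrywise nonnegative, so `x ↦ exp (a • A) *ᵥ x`
is monotone in both `a ≥ 0` and `x ⪰ 0`: compare the exponential series term by term. With
`u = 1`, the vectors `v = (βA − (γ/q)I)u` and `w = (βA − γI)u` have entries `β dᵢ − γ/q` and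
`β dᵢ − γ`. The threshold gives `γ/q ≤ γ/q² < β k_min`, so `0 ⪯ v`, and `q ≤ 1` gives `v ⪯ w`.
Hence `e^{qβAt} v ⪯ e^{βAt} w`, and the factor `e^{(p/q)γt} ≥ 1` only enlarges the nonnegative
vector `e^{βAt} w`.
-/

open Matrix NormedSpace
open scoped Nat

namespace Matrix

theorem mulVec_mono_of_nonneg {m n α : Type*} [Fintype n] [Semiring α] [PartialOrder α]
    [IsOrderedRing α] {M : Matrix m n α} (hM : ∀ i j, 0 ≤ M i j) {x y : n → α} (hxy : x ≤ y) :
    M *ᵥ x ≤ M *ᵥ y := fun i =>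
  Finset.sum_le_sum fun j _ => mul_le_mul_of_nonneg_left (hxy j) (hM i j)

variable {ι : Type*} [Fintype ι] [DecidableEq ι]

open scoped Norms.Operator in
theorem hasSum_exp_mulVec {𝕂 : Type*} [RCLike 𝕂] (M : Matrix ι ι 𝕂) (x : ι → 𝕂) :
    HasSum (fun k : ℕ => (k ! : 𝕂)⁻¹ • (M ^ k *ᵥ x)) (exp M *ᵥ x) := by
  have hcont : Continuous fun N : Matrix ι ι 𝕂 => N *ᵥ x := by fun_prop
  convert (exp_series_hasSum_exp' (𝕂 := 𝕂) M).map
      (AddMonoidHom.mk' (fun N : Matrix ι ι 𝕂 => N *ᵥ x) fun N N' => add_mulVec N N' x) hcont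
    using 2 with k
  · simp [smul_mulVec]
  · rfl

theorem exp_smul_mulVec_mono {M : Matrix ι ι ℝ} (hM : ∀ i j, 0 ≤ M i j) {a b : ℝ}
    (ha : 0 ≤ a) (hab : a ≤ b) {x y : ι → ℝ} (hx : 0 ≤ x) (hxy : x ≤ y) :
    exp (a • M) *ᵥ x ≤ exp (b • M) *ᵥ y := by
  refine hasSum_le (fun k => ?_) (hasSum_exp_mulVec _ x) (hasSum_exp_mulVec _ y)
  have hMk := pow_apply_nonneg hM k
  simp only [smul_pow, smul_mulVec]
  gcongr
  refine smul_le_smul (pow_le_pow_left₀ ha hab k) (mulVec_mono_of_nonneg hMk hxy) (by positivity) ?_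
  simpa using mulVec_mono_of_nonneg hMk (hx.trans hxy)

end Matrix

namespace SimpleGraph

variable {V : Type*} (G : SimpleGraph V) [DecidableRel G.Adj]

theorem adjMatrix_apply_nonneg (i j : V) : 0 ≤ G.adjMatrix ℝ i j := by
  rw [adjMatrix_apply]
  split_ifs <;> norm_num

theorem smul_adjMatrix_sub_smul_one_mulVec_one_apply [Fintype V] [DecidableEq V] (β c : ℝ)
    (i : V) :
    ((β • G.adjMatrix ℝ - c • (1 : Matrix V V ℝ)) *ᵥ fun _ => 1) i = β * G.degree i - c := by
  simp [sub_mulVec, smul_mulVec]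

end SimpleGraph

theorem exp_bound_componentwise_general (n : ℕ) (G : SimpleGraph (Fin n)) [DecidableRel G.Adj]
    (kmin : ℕ) (hkpos : 0 < kmin)
    (hkmin : ∀ i, kmin ≤ G.degree i)
    (A : Matrix (Fin n) (Fin n) ℝ) (hA : A = G.adjMatrix ℝ)
    (β γ p q : ℝ) (hβ : 0 < β) (hγ : 0 < γ) (hp : p ∈ Set.Ioo (0:ℝ) 1) (hq : q = 1 - p)
    (hthr : β / γ > 1 / (q ^ 2 * kmin))
    (u : Fin n → ℝ) (hu : u = fun _ => 1) :
    ∀ t : ℝ, 0 ≤ t → ∀ i : Fin n,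
      (NormedSpace.exp (t • ((q * β) • A)) *ᵥ ((β • A - (γ / q) • (1 : Matrix (Fin n) (Fin n) ℝ)) *ᵥ u)) i ≤
      Real.exp ((p / q) * γ * t) *
        (NormedSpace.exp (t • (β • A)) *ᵥ ((β • A - γ • (1 : Matrix (Fin n) (Fin n) ℝ)) *ᵥ u)) i := by
  obtain ⟨hp0, hp1⟩ := hp
  have hq0 : 0 < q := by linarith
  have hq1 : q ≤ 1 := by linarith
  have hγq : γ ≤ γ / q := le_div_self hγ.le hq0 hq1
  have hγk : γ / q ≤ β * kmin := by
    have hk : (1 : ℝ) ≤ kmin := by exact_mod_cast hkpos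
    rw [gt_iff_lt, div_lt_div_iff₀ (by positivity) hγ, one_mul] at hthr
    rw [div_le_iff₀ hq0]
    nlinarith
  subst hA hu
  have hv : 0 ≤ (β • G.adjMatrix ℝ - (γ / q) • 1) *ᵥ fun _ => (1 : ℝ) := fun i => by
    have hi : β * kmin ≤ β * G.degree i := by gcongr; exact_mod_cast hkmin i
    rw [Pi.zero_apply, G.smul_adjMatrix_sub_smul_one_mulVec_one_apply]
    linarith
  have hvw : ((β • G.adjMatrix ℝ - (γ / q) • 1) *ᵥ fun _ => (1 : ℝ)) ≤
      (β • G.adjMatrix ℝ - γ • 1) *ᵥ fun _ => 1 := fun i => by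
    simp only [G.smul_adjMatrix_sub_smul_one_mulVec_one_apply]
    linarith
  intro t ht i
  rw [smul_smul, smul_smul]
  have hw := exp_smul_mulVec_mono G.adjMatrix_apply_nonneg (a := t * β) (by positivity) le_rfl
    le_rfl (hv.trans hvw)
  rw [mulVec_zero] at hw
  have hqβ : t * (q * β) ≤ t * β := by gcongr; nlinarith
  calc _ ≤ _ := exp_smul_mulVec_mono G.adjMatrix_apply_nonneg (by positivity) hqβ hv hvw i
    _ ≤ _ := le_mul_of_one_le_left (hw i) (Real.one_le_exp (by positivity))

theorem exp_bound_componentwise (n : ℕ) (G : SimpleGraph (Fin n)) [DecidableRel G.Adj]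
    (hconn : G.Connected) (kmin : ℕ) (hkpos : 0 < kmin)
    (hkmin : ∀ i, kmin ≤ G.degree i)
    (A : Matrix (Fin n) (Fin n) ℝ) (hA : A = G.adjMatrix ℝ)
    (β γ p q : ℝ) (hβ : 0 < β) (hγ : 0 < γ) (hp : p ∈ Set.Ioo (0:ℝ) 1) (hq : q = 1 - p)
    (hthr : β / γ > 1 / (q ^ 2 * kmin))
    (u : Fin n → ℝ) (hu : u = fun _ => 1) :
    ∀ t : ℝ, 0 ≤ t → ∀ i : Fin n,
      (NormedSpace.exp (t • ((q * β) • A)) *ᵥ ((β • A - (γ / q) • (1 : Matrix (Fin n) (Fin n) ℝ)) *ᵥ u)) i ≤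
      Real.exp ((p / q) * γ * t) *
        (NormedSpace.exp (t • (β • A)) *ᵥ ((β • A - γ • (1 : Matrix (Fin n) (Fin n) ℝ)) *ᵥ u)) i :=
  exp_bound_componentwise_general n G kmin hkpos hkmin A hA β γ p q hβ hγ hp hq hthr u hu
end

section
/- With B = qβA − (γ/q)I, q = 1−p, β_e = β/γ, and D = I − q²β_e A invertible, the vector B⁻¹b − log(q)·u equals (p/q)·(I − p·D⁻¹)·u, where b = [(p + q log q)βA − (p + log q)(γ/q)I]u. -/
/-!
Up to the factor `-(q/γ)`, `D` is `B`, so `D⁻¹ = -(γ/q) • B⁻¹`. The matrix defining `b` is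
`((p + q log q)/q) • B + (p²γ/q²) • 1`, hence
`B⁻¹ b = ((p + q log q)/q) u + (p²γ/q²) B⁻¹ u`, and both sides of the identity equal
`(p/q) u + (p²γ/q²) B⁻¹ u`.
-/

open Matrix

namespace Matrix

variable {m K : Type*} [Fintype m] [DecidableEq m] [Field K]

theorem inv_smul_of_ne_zero {k : K} (hk : k ≠ 0) {B : Matrix m m K} (hB : IsUnit B.det) :
    (k • B)⁻¹ = k⁻¹ • B⁻¹ :=
  inv_smul' B (Units.mk0 k hk) hB

theorem nonsing_inv_mulVec_smul_add_smul_one_mulVec {B : Matrix m m K} (hB : IsUnit B.det)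
    (c d : K) (v : m → K) :
    B⁻¹ *ᵥ ((c • B + d • 1) *ᵥ v) = c • v + d • (B⁻¹ *ᵥ v) := by
  rw [add_mulVec, smul_mulVec, smul_mulVec, one_mulVec, mulVec_add, mulVec_smul,
    mulVec_smul, mulVec_mulVec, nonsing_inv_mul _ hB, one_mulVec]

end Matrix

theorem Binv_b_identity_general (n : ℕ) (A : Matrix (Fin n) (Fin n) ℝ)
    (β γ p q βe : ℝ) (hγ : 0 < γ) (hp : p ∈ Set.Ioo (0:ℝ) 1)
    (hq : q = 1 - p) (hβe : βe = β / γ)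
    (u : Fin n → ℝ)
    (B : Matrix (Fin n) (Fin n) ℝ)
    (hB : B = (q * β) • A - (γ / q) • (1 : Matrix (Fin n) (Fin n) ℝ))
    (hBinv : IsUnit B.det)
    (D : Matrix (Fin n) (Fin n) ℝ)
    (hD : D = (1 : Matrix (Fin n) (Fin n) ℝ) - (q ^ 2 * βe) • A)
    (b : Fin n → ℝ)
    (hb : b = ((p + q * Real.log q) • (β • A) - ((p + Real.log q) * (γ / q)) • (1 : Matrix (Fin n) (Fin n) ℝ)) *ᵥ u) :
    B⁻¹ *ᵥ b - Real.log q • u = (p / q) • (((1 : Matrix (Fin n) (Fin n) ℝ) - p • D⁻¹) *ᵥ u) := by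
  have hq0 : q ≠ 0 := by linarith [hp.2]
  have hγ0 : γ ≠ 0 := hγ.ne'
  have hDB : D = (-(q / γ)) • B := by
    rw [hD, hB, hβe]
    match_scalars <;> field_simp
  have hDinv : D⁻¹ = (-(γ / q)) • B⁻¹ := by
    rw [hDB, inv_smul_of_ne_zero (by simp [hq0, hγ0]) hBinv, inv_neg, inv_div]
  have hbB : b = (((p + q * Real.log q) / q) • B + (p ^ 2 * γ / q ^ 2) • 1) *ᵥ u := by
    rw [hb, hB]
    congr 1
    match_scalars
    · field_simp
    · rw [show p = 1 - q by linarith]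
      field_simp
      ring
  rw [hbB, nonsing_inv_mulVec_smul_add_smul_one_mulVec hBinv, hDinv, sub_mulVec, one_mulVec,
    smul_mulVec, smul_mulVec]
  funext i
  simp only [Pi.add_apply, Pi.sub_apply, Pi.smul_apply, smul_eq_mul]
  field_simp
  ring

theorem Binv_b_identity (n : ℕ) (A : Matrix (Fin n) (Fin n) ℝ) (hsym : A.IsSymm)
    (β γ p q βe : ℝ) (hβ : 0 < β) (hγ : 0 < γ) (hp : p ∈ Set.Ioo (0:ℝ) 1)
    (hq : q = 1 - p) (hβe : βe = β / γ)
    (u : Fin n → ℝ) (hu : u = fun _ => 1)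
    (B : Matrix (Fin n) (Fin n) ℝ)
    (hB : B = (q * β) • A - (γ / q) • (1 : Matrix (Fin n) (Fin n) ℝ))
    (hBinv : IsUnit B.det)
    (D : Matrix (Fin n) (Fin n) ℝ)
    (hD : D = (1 : Matrix (Fin n) (Fin n) ℝ) - (q ^ 2 * βe) • A)
    (b : Fin n → ℝ)
    (hb : b = ((p + q * Real.log q) • (β • A) - ((p + Real.log q) * (γ / q)) • (1 : Matrix (Fin n) (Fin n) ℝ)) *ᵥ u) :
    B⁻¹ *ᵥ b - Real.log q • u = (p / q) • (((1 : Matrix (Fin n) (Fin n) ℝ) - p • D⁻¹) *ᵥ u) :=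
  Binv_b_identity_general n A β γ p q βe hγ hp hq hβe u B hB hBinv D hD b hb
end

section
/- The epidemic threshold condition for the worst-case scenario solution: if β/γ < 1/(q²λ₁), then every eigenvalue of B = qβA − (γ/q)I is negative, so the solution Î(t) = e^{Bt}(B⁻¹b − log q·u) − B⁻¹b converges to −B⁻¹b as t → ∞. -/
/-!
The threshold condition is `q β λ₁ < γ / q`, so shifting and scaling the spectrum of `A` puts
the spectrum of `B = q β A - (γ / q) I` below `q β λ₁ - γ / q < 0`. Since `B` is symmetric,
`exp (t B) = U diag (e^{t λᵢ}) Uᵀ` with all `λᵢ < 0`, which tends to `0`; hence the trajectory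
tends to `-B⁻¹ b`.
-/

open Matrix NormedSpace Filter

theorem spectrum.le_of_mem_smul_sub_algebraMap {𝕜 R : Type*} [Field 𝕜] [LinearOrder 𝕜]
    [IsStrictOrderedRing 𝕜] [Ring R] [Algebra 𝕜 R] {a : R} {c d lam ν : 𝕜} (hc : 0 < c)
    (ha : ∀ μ ∈ spectrum 𝕜 a, μ ≤ lam) (hν : ν ∈ spectrum 𝕜 (c • a - algebraMap 𝕜 R d)) :
    ν ≤ c * lam - d := by
  rw [← spectrum.sub_singleton_eq, ← Units.val_mk0 hc.ne', ← Units.smul_def,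
    spectrum.unit_smul_eq_smul] at hν
  obtain ⟨_, ⟨μ, hμ, rfl⟩, _, rfl, rfl⟩ := hν
  simpa using mul_le_mul_of_nonneg_left (ha μ hμ) hc.le

namespace Matrix.IsHermitian

variable {𝕜 n : Type*} [RCLike 𝕜] [Fintype n] [DecidableEq n] {A : Matrix n n 𝕜}

theorem exp_smul_eq_mul_diagonal_mul (hA : A.IsHermitian) (t : ℝ) :
    NormedSpace.exp (t • A) = (hA.eigenvectorUnitary : Matrix n n 𝕜) *
      diagonal (fun i => (Real.exp (t * hA.eigenvalues i) : 𝕜)) * star hA.eigenvectorUnitary := by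
  set U := hA.eigenvectorUnitary
  calc NormedSpace.exp (t • A)
      = NormedSpace.exp
          ((U : Matrix n n 𝕜) * diagonal (fun i => ((t * hA.eigenvalues i : ℝ) : 𝕜)) * star U) := by
        conv_lhs => rw [hA.spectral_theorem]
        rw [Unitary.conjStarAlgAut_apply, ← Matrix.smul_mul, ← Matrix.mul_smul, ← diagonal_smul]
        congr 4
        funext i
        simp [RCLike.real_smul_eq_coe_mul]
    _ = U * NormedSpace.exp (diagonal (fun i => ((t * hA.eigenvalues i : ℝ) : 𝕜))) * star U :=
        Matrix.exp_units_conj (Unitary.toUnits U) _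
    _ = _ := by
        rw [exp_diagonal, Real.exp_eq_exp_ℝ]
        congr 3
        funext i
        rw [Pi.exp_def]
        exact (algebraMap_exp_comm (𝕂 := ℝ) (𝔸 := 𝕜) _).symm

theorem tendsto_exp_smul_atTop_nhds_zero (hA : A.IsHermitian)
    (hneg : ∀ μ ∈ spectrum ℝ A, μ < 0) :
    Tendsto (fun t : ℝ => NormedSpace.exp (t • A)) atTop (nhds 0) := by
  simp_rw [hA.exp_smul_eq_mul_diagonal_mul]
  have hdiag : Tendsto (fun t : ℝ => diagonal fun i => (Real.exp (t * hA.eigenvalues i) : 𝕜))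
      atTop (nhds (diagonal 0)) := by
    refine (continuous_id.matrix_diagonal.tendsto _).comp (tendsto_pi_nhds.2 fun i => ?_)
    have hi := hneg _ (hA.eigenvalues_mem_spectrum_real i)
    simpa [Function.comp_def] using ((RCLike.continuous_ofReal (K := 𝕜)).tendsto 0).comp
      (Real.tendsto_exp_atBot.comp (tendsto_id.atTop_mul_const_of_neg hi))
  have hconj : Continuous fun M : Matrix n n 𝕜 => (hA.eigenvectorUnitary : Matrix n n 𝕜) * M *
      star hA.eigenvectorUnitary :=
    (continuous_const.matrix_mul continuous_id).matrix_mul continuous_const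
  simpa [Function.comp_def] using (hconj.tendsto _).comp hdiag

end Matrix.IsHermitian

theorem epidemic_threshold_decay_general (n : ℕ) (A : Matrix (Fin n) (Fin n) ℝ) (hsym : A.IsSymm)
    (lam1 : ℝ)
    (hspec : ∀ μ ∈ spectrum ℝ A, μ ≤ lam1)
    (q β γ : ℝ) (hq : q ∈ Set.Ioo (0:ℝ) 1) (hβ : 0 < β) (hγ : 0 < γ)
    (hthr : β / γ < 1 / (q ^ 2 * lam1))
    (u b : Fin n → ℝ)
    (B : Matrix (Fin n) (Fin n) ℝ)
    (hB : B = (q * β) • A - (γ / q) • (1 : Matrix (Fin n) (Fin n) ℝ)) :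
    (∀ μ ∈ spectrum ℝ B, μ < 0) ∧
    Tendsto (fun t : ℝ => exp (t • B) *ᵥ (B⁻¹ *ᵥ b - Real.log q • u) - B⁻¹ *ᵥ b)
      atTop (nhds (-(B⁻¹ *ᵥ b))) := by
  obtain ⟨hq0, -⟩ := hq
  have hqlam : 0 < q ^ 2 * lam1 := one_div_pos.1 ((div_pos hβ hγ).trans hthr)
  have hcoef : q * β * lam1 < γ / q := by
    rw [div_lt_div_iff₀ hγ hqlam] at hthr
    rw [lt_div_iff₀ hq0]
    linarith
  have hherm : B.IsHermitian := hB ▸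
    ((isHermitian_iff_isSymm.2 hsym).smul (.all _)).sub (isHermitian_one.smul (.all _))
  rw [← Algebra.algebraMap_eq_smul_one] at hB
  have hneg : ∀ μ ∈ spectrum ℝ B, μ < 0 := fun μ hμ =>
    (spectrum.le_of_mem_smul_sub_algebraMap (by positivity) hspec (hB ▸ hμ)).trans_lt
      (sub_neg.2 hcoef)
  refine ⟨hneg, ?_⟩
  have hsol : Continuous fun M : Matrix (Fin n) (Fin n) ℝ =>
      M *ᵥ (B⁻¹ *ᵥ b - Real.log q • u) - B⁻¹ *ᵥ b :=
    (continuous_id.matrix_mulVec continuous_const).sub continuous_const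
  simpa [Function.comp_def] using
    (hsol.tendsto 0).comp (hherm.tendsto_exp_smul_atTop_nhds_zero hneg)

theorem epidemic_threshold_decay (n : ℕ) (A : Matrix (Fin n) (Fin n) ℝ) (hsym : A.IsSymm)
    (lam1 : ℝ) (hlam1 : 0 < lam1)
    (hspec : ∀ μ ∈ spectrum ℝ A, μ ≤ lam1)
    (q β γ : ℝ) (hq : q ∈ Set.Ioo (0:ℝ) 1) (hβ : 0 < β) (hγ : 0 < γ)
    (hthr : β / γ < 1 / (q ^ 2 * lam1))
    (u b : Fin n → ℝ) (hu : u = fun _ => 1)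
    (B : Matrix (Fin n) (Fin n) ℝ)
    (hB : B = (q * β) • A - (γ / q) • (1 : Matrix (Fin n) (Fin n) ℝ)) :
    (∀ μ ∈ spectrum ℝ B, μ < 0) ∧
    Tendsto (fun t : ℝ => exp (t • B) *ᵥ (B⁻¹ *ᵥ b - Real.log q • u) - B⁻¹ *ᵥ b)
      atTop (nhds (-(B⁻¹ *ᵥ b))) :=
  epidemic_threshold_decay_general n A hsym lam1 hspec q β γ hq hβ hγ hthr u b B hB
end

section
/- Under the condition β_e < 1/(qλ₁) (hence also q²β_eλ₁ < 1), for each node i, the worst-case susceptibility ŝᵢ(t) = q·exp(−Σ_ν ζ_ν(i)·α_ν·(e^{−(γ/q)(1−q²β_eλ_ν)t} − 1)), where α_ν = (p − p q β_e λ_ν)/(1 − q²β_e λ_ν) and ζ_ν(i) = ψ_ν(i)·Σⱼ ψ_ν(j), is asymptotically equivalent as t → ∞ to the Gompertz function s̃ᵢ(t) = Pᵢ·exp(−Qᵢ·e^{−Rt}) with Pᵢ = q·exp(Σ_ν α_ν ζ_ν(i)), Qᵢ = α₁ζ₁(i), R = (γ/q)(1 − q²β_eλ₁); that is, ŝᵢ(t)/s̃ᵢ(t)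 → 1 as t → ∞ provided λ₁ is a simple eigenvalue strictly larger than all other eigenvalues. -/
/-!
Dividing out the constants, `ŝᵢ(t) / s̃ᵢ(t) = exp (α₁ ζ₁(i) e^{-R t} - ∑_ν ζ_ν(i) α_ν e^{-c_ν t})`
with `c_ν = (γ/q)(1 - q² βₑ λ_ν)` and `R = c₁`. Since `λ_ν ≤ λ₁` and `q² βₑ λ₁ < q ≤ 1` by the
threshold condition, every rate `c_ν` is positive, so the exponent tends to `0`.
-/

open Matrix Filter Finset

open Real Topology

theorem tendsto_exp_neg_mul_atTop {c : ℝ} (hc : 0 < c) :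
    Tendsto (fun t => exp (-c * t)) atTop (𝓝 0) :=
  tendsto_exp_comp_nhds_zero.mpr (tendsto_id.const_mul_atTop_of_neg (neg_neg_of_pos hc))

theorem tendsto_sum_mul_exp_neg_mul_atTop {ι : Type*} [Fintype ι] (w c : ι → ℝ)
    (hc : ∀ ν, 0 < c ν) : Tendsto (fun t => ∑ ν, w ν * exp (-c ν * t)) atTop (𝓝 0) := by
  simpa using tendsto_finsetSum univ fun ν _ => (tendsto_exp_neg_mul_atTop (hc ν)).const_mul (w ν)

theorem mul_exp_div_mul_exp_mul_exp_eq {ι : Type*} [Fintype ι] {q : ℝ} (hq : q ≠ 0)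
    (w e : ι → ℝ) (ν₁ : ι) :
    q * exp (-∑ ν, w ν * (e ν - 1)) / (q * exp (∑ ν, w ν) * exp (-w ν₁ * e ν₁)) =
      exp (w ν₁ * e ν₁ - ∑ ν, w ν * e ν) := by
  rw [mul_assoc, mul_div_mul_left _ _ hq, ← exp_add, ← exp_sub]
  simp only [mul_sub, mul_one, sum_sub_distrib]
  ring_nf

theorem tendsto_div_gompertz_atTop {ι : Type*} [Fintype ι] {q : ℝ} (hq : q ≠ 0)
    (w c : ι → ℝ) (hc : ∀ ν, 0 < c ν) (ν₁ : ι) :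
    Tendsto (fun t => q * exp (-∑ ν, w ν * (exp (-c ν * t) - 1)) /
      (q * exp (∑ ν, w ν) * exp (-w ν₁ * exp (-c ν₁ * t)))) atTop (𝓝 1) := by
  simp only [mul_exp_div_mul_exp_mul_exp_eq hq]
  have hexponent := ((tendsto_exp_neg_mul_atTop (hc ν₁)).const_mul (w ν₁)).sub
    (tendsto_sum_mul_exp_neg_mul_atTop w c hc)
  rw [mul_zero, sub_zero] at hexponent
  rw [← exp_zero]
  exact (continuous_exp.tendsto 0).comp hexponent

theorem sq_mul_mul_lt_one_of_lt_one_div {q βe l l₁ : ℝ} (hq0 : 0 < q) (hq1 : q ≤ 1)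
    (hβe : 0 < βe) (hl : l ≤ l₁) (hthr : βe < 1 / (q * l₁)) : q ^ 2 * βe * l < 1 := by
  have hql₁ : 0 < q * l₁ := one_div_pos.mp (hβe.trans hthr)
  have hlt : βe * (q * l₁) < 1 := (lt_div_iff₀ hql₁).mp hthr
  nlinarith [mul_le_mul_of_nonneg_left hl (by positivity : 0 ≤ q ^ 2 * βe)]

theorem worst_case_susceptibility_gompertz_asymptotics_general
    (n : ℕ)
    (ν₁ : Fin n) (lam : Fin n → ℝ)
    (hdom : ∀ ν : Fin n, ν ≠ ν₁ → lam ν < lam ν₁)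
    (p q β γ βe : ℝ) (hp : p ∈ Set.Ioo (0:ℝ) 1) (hq : q = 1 - p)
    (hβ : 0 < β) (hγ : 0 < γ) (hβe : βe = β / γ)
    (hthr : βe < 1 / (q * lam ν₁))
    (α : Fin n → ℝ)
    (ζ : Fin n → Fin n → ℝ)
    (shat : Fin n → ℝ → ℝ)
    (hshat : ∀ i t, shat i t =
      q * Real.exp (-(∑ ν, ζ ν i * α ν *
        (Real.exp (-(γ / q) * (1 - q ^ 2 * βe * lam ν) * t) - 1))))
    (P Q : Fin n → ℝ) (R : ℝ)
    (hP : ∀ i, P i = q * Real.exp (∑ ν, α ν * ζ ν i))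
    (hQ : ∀ i, Q i = α ν₁ * ζ ν₁ i)
    (hR : R = (γ / q) * (1 - q ^ 2 * βe * lam ν₁))
    (stilde : Fin n → ℝ → ℝ)
    (hstilde : ∀ i t, stilde i t = P i * Real.exp (-(Q i) * Real.exp (-R * t))) :
    ∀ i, Tendsto (fun t => shat i t / stilde i t) atTop (nhds 1) := by
  intro i
  have hq0 : 0 < q := by rw [hq]; linarith [hp.2]
  have hrate : ∀ ν, 0 < γ / q * (1 - q ^ 2 * βe * lam ν) := fun ν =>
    mul_pos (div_pos hγ hq0) <| sub_pos.mpr <|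
      sq_mul_mul_lt_one_of_lt_one_div hq0 (by rw [hq]; linarith [hp.1])
        (by rw [hβe]; exact div_pos hβ hγ)
        (by by_cases h : ν = ν₁ <;> [exact h ▸ le_rfl; exact (hdom ν h).le]) hthr
  refine (tendsto_div_gompertz_atTop hq0.ne' (fun ν => ζ ν i * α ν) _ hrate ν₁).congr
    fun t => ?_
  simp only [hshat, hstilde, hP, hQ, hR, neg_mul, mul_comm (α _)]

theorem worst_case_susceptibility_gompertz_asymptotics
    (n : ℕ) (hn : 2 ≤ n) (G : SimpleGraph (Fin n)) [DecidableRel G.Adj]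
    (hconn : G.Connected)
    (A : Matrix (Fin n) (Fin n) ℝ) (hA : A = G.adjMatrix ℝ)
    (ν₁ : Fin n) (lam : Fin n → ℝ) (ψ : Fin n → Fin n → ℝ)
    (heig : ∀ ν, A *ᵥ ψ ν = lam ν • ψ ν)
    (horth : ∀ ν μ, ∑ i, ψ ν i * ψ μ i = if ν = μ then 1 else 0)
    (hdom : ∀ ν : Fin n, ν ≠ ν₁ → lam ν < lam ν₁)
    (p q β γ βe : ℝ) (hp : p ∈ Set.Ioo (0:ℝ) 1) (hq : q = 1 - p)
    (hβ : 0 < β) (hγ : 0 < γ) (hβe : βe = β / γ)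
    (hthr : βe < 1 / (q * lam ν₁))
    (α : Fin n → ℝ) (hα : ∀ ν, α ν = (p - p * q * βe * lam ν) / (1 - q ^ 2 * βe * lam ν))
    (ζ : Fin n → Fin n → ℝ) (hζ : ∀ ν i, ζ ν i = ψ ν i * ∑ j, ψ ν j)
    (shat : Fin n → ℝ → ℝ)
    (hshat : ∀ i t, shat i t =
      q * Real.exp (-(∑ ν, ζ ν i * α ν *
        (Real.exp (-(γ / q) * (1 - q ^ 2 * βe * lam ν) * t) - 1))))
    (P Q : Fin n → ℝ) (R : ℝ)
    (hP : ∀ i, P i = q * Real.exp (∑ ν, α ν * ζ ν i))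
    (hQ : ∀ i, Q i = α ν₁ * ζ ν₁ i)
    (hR : R = (γ / q) * (1 - q ^ 2 * βe * lam ν₁))
    (stilde : Fin n → ℝ → ℝ)
    (hstilde : ∀ i t, stilde i t = P i * Real.exp (-(Q i) * Real.exp (-R * t))) :
    ∀ i, Tendsto (fun t => shat i t / stilde i t) atTop (nhds 1) :=
  worst_case_susceptibility_gompertz_asymptotics_general n ν₁ lam hdom p q β γ βe hp hq hβ hγ hβe
    hthr α ζ shat hshat P Q R hP hQ hR stilde hstilde
end

section
/- In the supercritical case β_e > 1/(q²λ₁) (so 1 − q²β_eλ₁ < 0), with λ₁ simple and dominant, the worst-case susceptibility ŝᵢ(t) = q·exp(−Σ_ν ζ_ν(i)·α_ν·(e^{−(γ/q)(1−q²β_eλ_ν)t} − 1)) tends to 0 as t → ∞ for every node i, provided ζ₁(i) > 0 and α₁ > 0. -/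
/-! Writing `ŝᵢ(t) = q · exp (-S(t))` with `S(t) = ∑_ν a_ν (e^{c_ν t} - 1)`, the growth rate
`c_ν = -(γ/q)(1 - q²β_eλ_ν)` is positive for `ν₁` in the supercritical regime and strictly larger
than every other rate because `λ₁` is dominant. Hence `S(t) e^{-c_{ν₁} t} → a_{ν₁} = ζ_{ν₁}(i) α_{ν₁} > 0`,
so `S(t) → ∞` and `ŝᵢ(t) → 0`. -/

open Matrix Filter Finset Real Topology

lemma tendsto_exp_mul_atTop_nhds_zero {c : ℝ} (hc : c < 0) :
    Tendsto (fun t => exp (c * t)) atTop (𝓝 0) :=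
  tendsto_exp_atBot.comp (tendsto_id.const_mul_atTop_of_neg hc)

lemma tendsto_exp_sub_one_mul_exp_neg_of_lt {c d : ℝ} (hd : 0 < d) (hcd : c < d) :
    Tendsto (fun t => (exp (c * t) - 1) * exp (-(d * t))) atTop (𝓝 0) := by
  have hlim := (tendsto_exp_mul_atTop_nhds_zero (sub_neg.mpr hcd)).sub
    (tendsto_exp_mul_atTop_nhds_zero (neg_neg_iff_pos.mpr hd))
  rw [sub_zero] at hlim
  refine hlim.congr fun t => ?_
  rw [sub_one_mul, ← exp_add]
  ring_nf

lemma tendsto_exp_sub_one_mul_exp_neg_self {d : ℝ} (hd : 0 < d) :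
    Tendsto (fun t => (exp (d * t) - 1) * exp (-(d * t))) atTop (𝓝 1) := by
  have hlim := tendsto_const_nhds (x := (1 : ℝ)).sub
    (tendsto_exp_mul_atTop_nhds_zero (neg_neg_iff_pos.mpr hd))
  rw [sub_zero] at hlim
  refine hlim.congr fun t => ?_
  rw [sub_one_mul, ← exp_add, add_neg_cancel, exp_zero, neg_mul]

section DominantMode

variable {ι : Type*} [Fintype ι] (a c : ι → ℝ) {ν₁ : ι}

lemma tendsto_sum_exp_sub_one_mul_exp_neg (hc : 0 < c ν₁) (hdom : ∀ ν, ν ≠ ν₁ → c ν < c ν₁) :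
    Tendsto (fun t => (∑ ν, a ν * (exp (c ν * t) - 1)) * exp (-(c ν₁ * t))) atTop
      (𝓝 (a ν₁)) := by
  classical
  have hterm : ∀ ν, Tendsto (fun t => a ν * (exp (c ν * t) - 1) * exp (-(c ν₁ * t))) atTop
      (𝓝 (if ν = ν₁ then a ν₁ else 0)) := by
    intro ν
    simp_rw [mul_assoc]
    split_ifs with hν
    · subst hν
      simpa using (tendsto_exp_sub_one_mul_exp_neg_self hc).const_mul (a ν)
    · simpa using (tendsto_exp_sub_one_mul_exp_neg_of_lt hc (hdom ν hν)).const_mul (a ν)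
  simpa [Finset.sum_mul] using tendsto_finsetSum univ fun ν _ => hterm ν

lemma tendsto_sum_exp_sub_one_atTop (ha : 0 < a ν₁) (hc : 0 < c ν₁)
    (hdom : ∀ ν, ν ≠ ν₁ → c ν < c ν₁) :
    Tendsto (fun t => ∑ ν, a ν * (exp (c ν * t) - 1)) atTop atTop := by
  refine ((tendsto_sum_exp_sub_one_mul_exp_neg a c hc hdom).pos_mul_atTop ha
    (tendsto_exp_atTop.comp (tendsto_id.const_mul_atTop hc))).congr fun t => ?_
  simp only [Function.comp_apply, id, mul_assoc, ← exp_add, neg_add_cancel, exp_zero, mul_one]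

end DominantMode

theorem supercritical_susceptibility_to_zero_general
    (n : ℕ) (ν₁ : Fin n) (lam : Fin n → ℝ)
    (hdom : ∀ ν : Fin n, ν ≠ ν₁ → lam ν < lam ν₁)
    (p q β γ βe : ℝ) (hp : p ∈ Set.Ioo (0:ℝ) 1) (hq : q = 1 - p)
    (hβ : 0 < β) (hγ : 0 < γ) (hβe : βe = β / γ)
    (hsuper : 1 < q ^ 2 * βe * lam ν₁)
    (α : Fin n → ℝ)
    (ζ : Fin n → Fin n → ℝ)
    (hα1 : 0 < α ν₁)
    (shat : Fin n → ℝ → ℝ)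
    (hshat : ∀ i t, shat i t =
      q * Real.exp (-(∑ ν, ζ ν i * α ν *
        (Real.exp (-(γ / q) * (1 - q ^ 2 * βe * lam ν) * t) - 1)))) :
    ∀ i, 0 < ζ ν₁ i → Tendsto (fun t => shat i t) atTop (nhds 0) := by
  intro i hi
  have hq0 : 0 < q := by linarith [hp.2]
  have hγq : 0 < γ / q := div_pos hγ hq0
  have hβe0 : 0 < βe := hβe ▸ div_pos hβ hγ
  set c : Fin n → ℝ := fun ν => -(γ / q) * (1 - q ^ 2 * βe * lam ν)
  have hc : 0 < c ν₁ := by simp only [c]; nlinarith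
  have hcdom : ∀ ν, ν ≠ ν₁ → c ν < c ν₁ := by
    intro ν hν
    have hrate : 0 < γ / q * (q ^ 2 * βe) := by positivity
    simp only [c]
    nlinarith [hdom ν hν]
  have hS := tendsto_sum_exp_sub_one_atTop (fun ν => ζ ν i * α ν) c (mul_pos hi hα1) hc hcdom
  have hlim := (tendsto_exp_atBot.comp (tendsto_neg_atTop_atBot.comp hS)).const_mul q
  rw [mul_zero] at hlim
  exact hlim.congr fun t => (hshat i t).symm

theorem supercritical_susceptibility_to_zero
    (n : ℕ) (hn : 2 ≤ n) (G : SimpleGraph (Fin n)) [DecidableRel G.Adj]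
    (hconn : G.Connected)
    (A : Matrix (Fin n) (Fin n) ℝ) (hA : A = G.adjMatrix ℝ)
    (ν₁ : Fin n) (lam : Fin n → ℝ) (ψ : Fin n → Fin n → ℝ)
    (heig : ∀ ν, A *ᵥ ψ ν = lam ν • ψ ν)
    (horth : ∀ ν μ, ∑ i, ψ ν i * ψ μ i = if ν = μ then 1 else 0)
    (hdom : ∀ ν : Fin n, ν ≠ ν₁ → lam ν < lam ν₁)
    (p q β γ βe : ℝ) (hp : p ∈ Set.Ioo (0:ℝ) 1) (hq : q = 1 - p)
    (hβ : 0 < β) (hγ : 0 < γ) (hβe : βe = β / γ)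
    (hsuper : 1 < q ^ 2 * βe * lam ν₁)
    (α : Fin n → ℝ) (hα : ∀ ν, α ν = (p - p * q * βe * lam ν) / (1 - q ^ 2 * βe * lam ν))
    (ζ : Fin n → Fin n → ℝ) (hζ : ∀ ν i, ζ ν i = ψ ν i * ∑ j, ψ ν j)
    (hα1 : 0 < α ν₁)
    (shat : Fin n → ℝ → ℝ)
    (hshat : ∀ i t, shat i t =
      q * Real.exp (-(∑ ν, ζ ν i * α ν *
        (Real.exp (-(γ / q) * (1 - q ^ 2 * βe * lam ν) * t) - 1)))) :
    ∀ i, 0 < ζ ν₁ i → Tendsto (fun t => shat i t) atTop (nhds 0) :=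
  supercritical_susceptibility_to_zero_general n ν₁ lam hdom p q β γ βe hp hq hβ hγ hβe hsuper α ζ
    hα1 shat hshat
end
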